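/- For $n \ge 2$, the continuous-time quantum walk on the bunkbed graph $\mathcal{B}_n(Q_n)$, whose adjacency matrix is $J_2 \otimes A_{Q_n}$ where $J_2$ is the $2 \times 2$ all-ones matrix, starting at vertex $(0, 0_n)$, is not instantaneous uniform mixing at any time: for every $t \in \mathbb{R}$ there exists a vertex $v \in \mathbb{Z}_2 \times \mathbb{Z}_2^n$ with $|\psi_t(v)|^2 \neq 2^{-(n+1)}$. -/

import Mathlib

/-!
The characters `(c, x) ↦ (-1) ^ (b c + a ⬝ x)` of `ZMod 2 × (ZMod 2)ⁿ` are eigenvectors of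
`J₂ ⊗ A_{Q_n}`, with eigenvalue `2 (n - 2|a|)` if `b = 0` and `0` if `b = 1`. Expanding `δ_(0,0)`
in this eigenbasis, the amplitude at `(1, x)`, `x ≠ 0`, is a Fourier sum that factorises over the
coordinates: `ψ_t(1, x) = cos (2t) ^ (n - |x|) (-i sin (2t)) ^ |x| / 2`. Uniform mixing at a vertex
with `|x| = 1` and at one with `|x| = 2` would force `cos² (2t) = sin² (2t) = 1/2`, and then
`|ψ_t(1, x)|² = 2^-(n+2)` for `|x| = 1`.
-/

open Matrix Complex Finset Kronecker

/-- Hamming weight of a vector in `(ZMod 2)^n`. -/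
def wt {n : ℕ} (x : Fin n → ZMod 2) : ℕ := (Finset.univ.filter fun i => x i = 1).card

/-- Inner product modulo 2. -/
def dot {n : ℕ} (a x : Fin n → ZMod 2) : ZMod 2 := ∑ i, a i * x i

/-- Adjacency matrix of the hypercube `Q_n`: `A[x,y] = 1` iff `|x ⊕ y| = 1`. -/
def adjQ (n : ℕ) : Matrix (Fin n → ZMod 2) (Fin n → ZMod 2) ℂ :=
  Matrix.of fun x y => if wt (x + y) = 1 then 1 else 0

/-- Continuous-time quantum walk `ψ_t = exp(-itA) ψ₀`. -/
noncomputable def walk {V : Type*} [Fintype V] [DecidableEq V]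
    (A : Matrix V V ℂ) (ψ0 : V → ℂ) (t : ℝ) : V → ℂ :=
  (NormedSpace.exp ((-(t : ℂ) * Complex.I) • A)).mulVec ψ0

/-- Adjacency matrix of `𝓑_n(Q_n)`, namely `J₂ ⊗ Q_n` with `J₂` the 2×2
all-ones matrix. -/
def bunkbedQQ (n : ℕ) :
    Matrix (ZMod 2 × (Fin n → ZMod 2)) (ZMod 2 × (Fin n → ZMod 2)) ℂ :=
  (Matrix.of fun (_ _ : ZMod 2) => (1 : ℂ)) ⊗ₖ (adjQ n)

theorem Matrix.exp_mulVec_of_mulVec_eq_smul {V : Type*} [Fintype V] [DecidableEq V]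
    {M : Matrix V V ℂ} {v : V → ℂ} {μ : ℂ} (h : M *ᵥ v = μ • v) :
    NormedSpace.exp M *ᵥ v = Complex.exp μ • v := by
  -- any algebra norm will do: it only serves to sum the exponential series
  let _ : NormedRing (Matrix V V ℂ) := Matrix.linftyOpNormedRing
  let _ : NormedAlgebra ℂ (Matrix V V ℂ) := Matrix.linftyOpNormedAlgebra
  have hpow (k : ℕ) : M ^ k *ᵥ v = μ ^ k • v := by
    induction k with
    | zero => simp
    | succ k ih => rw [pow_succ', ← mulVec_mulVec, ih, mulVec_smul, h, smul_smul, pow_succ]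
  have hM := (NormedSpace.exp_series_hasSum_exp' (𝕂 := ℂ) M).map
    (mulVec.addMonoidHomLeft v) (continuous_id.matrix_mulVec continuous_const)
  have hμ := (NormedSpace.exp_series_hasSum_exp' (𝕂 := ℂ) μ).smul_const v
  rw [Complex.exp_eq_exp_ℂ]
  refine hM.unique (hμ.congr_fun fun k => ?_)
  simp [mulVec.addMonoidHomLeft, smul_mulVec, hpow, smul_smul]

theorem walk_sum_smul_of_mulVec_eq_smul {V ι : Type*} [Fintype V] [DecidableEq V]
    {A : Matrix V V ℂ} {v : ι → V → ℂ} {μ : ι → ℂ} (hv : ∀ k, A *ᵥ v k = μ k • v k)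
    (s : Finset ι) (c : ι → ℂ) (t : ℝ) :
    walk A (∑ k ∈ s, c k • v k) t = ∑ k ∈ s, (c k * Complex.exp (-t * I * μ k)) • v k := by
  have hexp (k : ι) : NormedSpace.exp ((-(t : ℂ) * I) • A) *ᵥ v k
      = Complex.exp (-t * I * μ k) • v k :=
    exp_mulVec_of_mulVec_eq_smul (by rw [smul_mulVec, hv, smul_smul])
  simp only [walk, mulVec_sum, mulVec_smul, hexp, smul_smul]

theorem Matrix.kronecker_mulVec_mul {R l m n p : Type*} [CommSemiring R] [Fintype m] [Fintype p]
    (A : Matrix l m R) (B : Matrix n p R) (u : m → R) (w : p → R) :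
    (A ⊗ₖ B) *ᵥ (fun q => u q.1 * w q.2) = fun q => (A *ᵥ u) q.1 * (B *ᵥ w) q.2 := by
  ext ⟨i, j⟩
  simp only [mulVec, dotProduct, kroneckerMap_apply, Fintype.sum_prod_type, sum_mul_sum]
  exact sum_congr rfl fun _ _ => sum_congr rfl fun _ _ => by ring

lemma ZMod.eq_zero_or_eq_one (u : ZMod 2) : u = 0 ∨ u = 1 := by revert u; decide

lemma ZMod.sum_univ_two {M : Type*} [AddCommMonoid M] (f : ZMod 2 → M) :
    ∑ u, f u = f 0 + f 1 :=
  Fin.sum_univ_two f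

def signChar : AddChar (ZMod 2) ℂ := AddChar.zmodChar 2 (by norm_num : (-1 : ℂ) ^ 2 = 1)

lemma signChar_apply (u : ZMod 2) : signChar u = if u = 1 then -1 else 1 := by
  rcases u.eq_zero_or_eq_one with rfl | rfl
  · simp
  · rw [signChar, AddChar.zmodChar_apply, if_pos rfl]
    exact pow_one _

lemma signChar_one : signChar 1 = -1 := by
  simp [signChar_apply]

lemma signChar_sum {ι : Type*} (s : Finset ι) (f : ι → ZMod 2) :
    signChar (∑ i ∈ s, f i) = ∏ i ∈ s, signChar (f i) := by
  induction s using Finset.cons_induction with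
  | empty => simp
  | cons i s hi ih => rw [sum_cons, prod_cons, AddChar.map_add_eq_mul, ih]

lemma sum_signChar_mul (c : ZMod 2) : ∑ b, signChar (c * b) = if c = 0 then 2 else 0 := by
  rcases c.eq_zero_or_eq_one with rfl | rfl <;> simp [ZMod.sum_univ_two, signChar_apply]

section Hypercube

variable {n : ℕ}

lemma wt_le (x : Fin n → ZMod 2) : wt x ≤ n :=
  (card_filter_le _ _).trans_eq (card_fin n)

lemma card_filter_ne_one (x : Fin n → ZMod 2) : #{i | x i ≠ 1} = n - wt x := by
  have := card_filter_add_card_filter_not (s := univ) (fun i => x i = 1)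
  simp only [card_univ, Fintype.card_fin, ne_eq] at this ⊢
  unfold wt; omega

lemma wt_eq_zero_iff {x : Fin n → ZMod 2} : wt x = 0 ↔ x = 0 := by
  simp only [wt, card_eq_zero, filter_eq_empty_iff, mem_univ, true_implies, funext_iff,
    Pi.zero_apply]
  exact forall_congr' fun i => by rcases (x i).eq_zero_or_eq_one with h | h <;> simp [h]

lemma wt_eq_one_iff {x : Fin n → ZMod 2} : wt x = 1 ↔ ∃ j, x = Pi.single j 1 := by
  simp only [wt, card_eq_one, Finset.ext_iff, mem_filter, mem_univ, true_and, mem_singleton,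
    funext_iff, Pi.single_apply]
  refine exists_congr fun j => forall_congr' fun i => ?_
  rcases (x i).eq_zero_or_eq_one with h | h <;> by_cases i = j <;> simp_all

lemma exists_wt_eq {k : ℕ} (hk : k ≤ n) : ∃ x : Fin n → ZMod 2, wt x = k :=
  ⟨fun i => if (i : ℕ) < k then 1 else 0, by simp [wt, Fin.card_filter_val_lt, hk]⟩

lemma prod_ite_eq_pow_mul_pow (x : Fin n → ZMod 2) (α β : ℂ) :
    ∏ i, (if x i = 1 then β else α) = α ^ (n - wt x) * β ^ wt x := by
  rw [prod_ite, prod_const, prod_const, card_filter_ne_one, mul_comm]; rfl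

theorem sum_pow_mul_pow_mul_signChar_dot (α β : ℂ) (x : Fin n → ZMod 2) :
    ∑ a : Fin n → ZMod 2, α ^ (n - wt a) * β ^ wt a * signChar (dot a x)
      = (α + β) ^ (n - wt x) * (α - β) ^ wt x := by
  have hterm (a : Fin n → ZMod 2) : α ^ (n - wt a) * β ^ wt a * signChar (dot a x)
      = ∏ i, (if a i = 1 then β else α) * signChar (a i * x i) := by
    rw [prod_mul_distrib, prod_ite_eq_pow_mul_pow, dot, signChar_sum]
  have hfactor (i : Fin n) : ∑ u : ZMod 2, (if u = 1 then β else α) * signChar (u * x i)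
      = if x i = 1 then α - β else α + β := by
    rcases (x i).eq_zero_or_eq_one with h | h <;>
      simp [h, ZMod.sum_univ_two, signChar_apply, sub_eq_add_neg]
  rw [Fintype.sum_congr _ _ hterm,
    ← Fintype.prod_sum fun i (u : ZMod 2) => (if u = 1 then β else α) * signChar (u * x i),
    Fintype.prod_congr _ _ hfactor, prod_ite_eq_pow_mul_pow]

lemma sum_signChar_dot (x : Fin n → ZMod 2) :
    ∑ a : Fin n → ZMod 2, signChar (dot a x) = if x = 0 then 2 ^ n else 0 := by
  have h := sum_pow_mul_pow_mul_signChar_dot 1 1 x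
  simp only [one_pow, one_mul, sub_self, one_add_one_eq_two] at h
  rw [h]
  split_ifs with hx
  · simp [wt_eq_zero_iff.mpr hx]
  · simp [wt_eq_zero_iff.not.mpr hx]

lemma sum_ite_wt_eq_one {M : Type*} [AddCommMonoid M] (f : (Fin n → ZMod 2) → M) :
    ∑ z, (if wt z = 1 then f z else 0) = ∑ j, f (Pi.single j 1) := by
  have hinj : Function.Injective fun j : Fin n => (Pi.single j 1 : Fin n → ZMod 2) :=
    fun i j h => by simpa [Pi.single_apply, eq_comm] using congr_fun h j
  calc ∑ z, (if wt z = 1 then f z else 0)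
      = ∑ z ∈ univ.image fun j => Pi.single j 1, f z := by
        rw [← sum_filter]; congr 1; ext z; simp [wt_eq_one_iff, eq_comm]
    _ = ∑ j, f (Pi.single j 1) := sum_image fun i _ j _ h => hinj h

lemma adjQ_mulVec_apply (v : (Fin n → ZMod 2) → ℂ) (x : Fin n → ZMod 2) :
    (adjQ n *ᵥ v) x = ∑ j, v (x + Pi.single j 1) := by
  simp only [mulVec, dotProduct, adjQ, of_apply, ite_mul, one_mul, zero_mul]
  rw [← Equiv.sum_comp (Equiv.addLeft x)]
  simp only [Equiv.coe_addLeft, ← add_assoc, ZModModule.add_self, zero_add]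
  exact sum_ite_wt_eq_one fun z => v (x + z)

lemma dot_add_single (a x : Fin n → ZMod 2) (j : Fin n) :
    dot a (x + Pi.single j 1) = dot a x + a j :=
  (dotProduct_add a x _).trans (by rw [dotProduct_single_one]; rfl)

lemma sum_signChar_apply (a : Fin n → ZMod 2) : ∑ j, signChar (a j) = (n : ℂ) - 2 * wt a := by
  simp only [signChar_apply, sum_ite, sum_const, card_filter_ne_one, nsmul_eq_mul,
    Nat.cast_sub (wt_le a)]
  rw [wt]; ring

theorem adjQ_mulVec_signChar_dot (a : Fin n → ZMod 2) :
    adjQ n *ᵥ (fun x => signChar (dot a x))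
      = ((n : ℂ) - 2 * wt a) • fun x => signChar (dot a x) := by
  ext x
  simp only [adjQ_mulVec_apply, dot_add_single, AddChar.map_add_eq_mul, ← mul_sum,
    sum_signChar_apply, Pi.smul_apply, smul_eq_mul]
  ring

end Hypercube

section Bunkbed

variable {n : ℕ}

def bunkbedEigenvector (q : ZMod 2 × (Fin n → ZMod 2)) : ZMod 2 × (Fin n → ZMod 2) → ℂ :=
  fun p => signChar (q.1 * p.1) * signChar (dot q.2 p.2)

theorem bunkbedQQ_mulVec_bunkbedEigenvector (q : ZMod 2 × (Fin n → ZMod 2)) :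
    bunkbedQQ n *ᵥ bunkbedEigenvector q
      = ((if q.1 = 0 then 2 else 0) * ((n : ℂ) - 2 * wt q.2)) • bunkbedEigenvector q := by
  unfold bunkbedQQ bunkbedEigenvector
  rw [kronecker_mulVec_mul _ _ (fun c => signChar (q.1 * c)) (fun x => signChar (dot q.2 x)),
    adjQ_mulVec_signChar_dot]
  ext p
  simp only [mulVec, dotProduct, of_apply, one_mul, sum_signChar_mul, Pi.smul_apply, smul_eq_mul]
  split_ifs with h <;> simp [h]
  ring

lemma sum_bunkbedEigenvector :
    ∑ q, bunkbedEigenvector q = (2 ^ (n + 1) : ℂ) • Pi.single (0, (0 : Fin n → ZMod 2)) 1 := by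
  ext ⟨c, x⟩
  simp only [Finset.sum_apply, Fintype.sum_prod_type, bunkbedEigenvector, ← mul_sum, ← sum_mul,
    sum_signChar_dot, mul_comm _ c, sum_signChar_mul, Pi.smul_apply, Pi.single_apply,
    Prod.mk.injEq, smul_eq_mul]
  split_ifs <;> simp_all [pow_succ, mul_comm]

lemma exp_eigenvalue_eq_pow_mul_pow (t : ℝ) (a : Fin n → ZMod 2) :
    Complex.exp (-t * I * (2 * ((n : ℂ) - 2 * wt a)))
      = Complex.exp (-(2 * t) * I) ^ (n - wt a) * Complex.exp (2 * t * I) ^ wt a := by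
  rw [← Complex.exp_nat_mul, ← Complex.exp_nat_mul, ← Complex.exp_add, Nat.cast_sub (wt_le a)]
  ring_nf

theorem walk_bunkbedQQ_apply_one (t : ℝ) {x : Fin n → ZMod 2} (hx : x ≠ 0) :
    walk (bunkbedQQ n) (Pi.single (0, 0) 1) t (1, x)
      = Real.cos (2 * t) ^ (n - wt x) * (-I * Real.sin (2 * t)) ^ wt x / 2 := by
  set α := Complex.exp (-(2 * t) * I)
  set β := Complex.exp (2 * t * I)
  have hδ : (Pi.single (0, 0) 1 : ZMod 2 × (Fin n → ZMod 2) → ℂ)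
      = ∑ q, ((2 : ℂ) ^ (n + 1))⁻¹ • bunkbedEigenvector q := by
    rw [← smul_sum, sum_bunkbedEigenvector, smul_smul, inv_mul_cancel₀ (pow_ne_zero _ two_ne_zero),
      one_smul]
  have hcos : α + β = 2 * Real.cos (2 * t) := by
    push_cast; linear_combination -(two_cos (2 * t : ℂ))
  have hsin : α - β = 2 * (-I * Real.sin (2 * t)) := by
    push_cast; linear_combination I * two_sin (2 * t : ℂ) + (α - β) * I_sq
  have hpow : (2 : ℂ) ^ (n + 1) = 2 ^ (n - wt x) * 2 ^ wt x * 2 := by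
    rw [pow_sub_mul_pow _ (wt_le x), pow_succ]
  calc walk (bunkbedQQ n) (Pi.single (0, 0) 1) t (1, x)
      = ((2 : ℂ) ^ (n + 1))⁻¹ * (∑ a, α ^ (n - wt a) * β ^ wt a * signChar (dot a x)
          - ∑ a, signChar (dot a x)) := by
        rw [hδ, walk_sum_smul_of_mulVec_eq_smul bunkbedQQ_mulVec_bunkbedEigenvector,
          Finset.sum_apply, Fintype.sum_prod_type, ZMod.sum_univ_two, mul_sub, mul_sum, mul_sum,
          sub_eq_add_neg, ← sum_neg_distrib]
        congr 1 <;> refine sum_congr rfl fun a _ => ?_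
        · simp only [Pi.smul_apply, smul_eq_mul, bunkbedEigenvector, ↓reduceIte, zero_mul,
            AddChar.map_zero_eq_one, one_mul, exp_eigenvalue_eq_pow_mul_pow]
          ring
        · simp only [Pi.smul_apply, smul_eq_mul, bunkbedEigenvector, one_ne_zero, ↓reduceIte,
            zero_mul, mul_zero, Complex.exp_zero, mul_one, signChar_one]
          ring
    _ = ((2 : ℂ) ^ (n + 1))⁻¹ * ((α + β) ^ (n - wt x) * (α - β) ^ wt x) := by
        rw [sum_pow_mul_pow_mul_signChar_dot, sum_signChar_dot, if_neg hx, sub_zero]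
    _ = _ := by
        rw [hcos, hsin, hpow, mul_pow, mul_pow]
        field_simp

theorem sq_norm_walk_bunkbedQQ_apply_one (t : ℝ) {x : Fin n → ZMod 2} (hx : x ≠ 0) :
    ‖walk (bunkbedQQ n) (Pi.single (0, 0) 1) t (1, x)‖ ^ 2
      = (Real.cos (2 * t) ^ 2) ^ (n - wt x) * (Real.sin (2 * t) ^ 2) ^ wt x / 4 := by
  simp only [walk_bunkbedQQ_apply_one t hx, norm_div, norm_mul, norm_pow, norm_neg, norm_I,
    norm_real, Real.norm_eq_abs, Complex.norm_two, div_pow, mul_pow]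
  rw [pow_right_comm, pow_right_comm |Real.sin _|, sq_abs, sq_abs]
  norm_num

end Bunkbed

theorem ne_or_ne_of_add_eq_one {c s : ℝ} (hcs : c + s = 1) {n : ℕ} (hn : 2 ≤ n) :
    c ^ (n - 1) * s ^ 1 / 4 ≠ 1 / 2 ^ (n + 1) ∨ c ^ (n - 2) * s ^ 2 / 4 ≠ 1 / 2 ^ (n + 1) := by
  obtain ⟨m, rfl⟩ := Nat.exists_eq_add_of_le' hn
  by_contra! h
  obtain ⟨h₁, h₂⟩ := h
  simp only [show m + 2 - 1 = m + 1 by omega, Nat.add_sub_cancel] at h₁ h₂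
  have hne : c ^ m * s ≠ 0 := by
    intro h0
    rw [show c ^ (m + 1) * s ^ 1 / 4 = c * (c ^ m * s) / 4 by ring, h0, mul_zero, zero_div] at h₁
    exact (by positivity : (0 : ℝ) < 1 / 2 ^ (m + 2 + 1)).ne h₁
  have hcs' : c = s := by
    have : c ^ m * s * (c - s) = 0 := by linear_combination 4 * (h₁ - h₂)
    exact sub_eq_zero.mp ((mul_eq_zero.mp this).resolve_left hne)
  have hc : c = 1 / 2 := by linarith
  subst hcs'
  rw [hc, show (1 / 2 : ℝ) ^ (m + 1) * (1 / 2) ^ 1 / 4 = 1 / 2 * (1 / 2 ^ (m + 2 + 1)) by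
    simp only [one_div, inv_pow]; field_simp; ring] at h₁
  linarith [(by positivity : (0 : ℝ) < 1 / 2 ^ (m + 2 + 1))]

/-- For `n ≥ 2`, the quantum walk on `𝓑_n(Q_n)` starting at `(0, 0_n)` is
never instantaneous uniform mixing. -/
theorem bunkbed_QnQn_not_uniform_mixing (n : ℕ) (hn : 2 ≤ n) :
    ∀ t : ℝ, ∃ v : ZMod 2 × (Fin n → ZMod 2),
      ‖walk (bunkbedQQ n)
        (Pi.single ((0 : ZMod 2), (0 : Fin n → ZMod 2)) 1) t v‖ ^ 2
        ≠ 1 / 2 ^ (n + 1) := by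
  intro t
  obtain ⟨x₁, hx₁⟩ := exists_wt_eq (by omega : 1 ≤ n)
  obtain ⟨x₂, hx₂⟩ := exists_wt_eq hn
  have hx₁₀ : x₁ ≠ 0 := wt_eq_zero_iff.not.mp (by omega)
  have hx₂₀ : x₂ ≠ 0 := wt_eq_zero_iff.not.mp (by omega)
  rcases ne_or_ne_of_add_eq_one (Real.cos_sq_add_sin_sq (2 * t)) hn with h | h
  · exact ⟨(1, x₁), by rwa [sq_norm_walk_bunkbedQQ_apply_one t hx₁₀, hx₁]⟩
  · exact ⟨(1, x₂), by rwa [sq_norm_walk_bunkbedQQ_apply_one t hx₂₀, hx₂]⟩
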